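/- arXiv:1510.02767 — 2 statements merged into one kernel-verified Lean document; each statement's English description precedes it below -/
import Mathlib

section
/- Let M ⊂ Z_d^{2n} be a Lagrangian subspace. Then the set of vectors {|M,v⟩ : v ranging over a set of coset representatives of V/M} is an orthonormal basis of (C^d)^{⊗n}; in particular |M,u⟩ = |M,v⟩ (up to phase) iff u - v ∈ M, and ⟨M,u|M,v⟩ = 0 otherwise. -/
noncomputable section

open scoped Classical

/-- The phase space `V = ℤ_d^n × ℤ_d^n ≃ ℤ_d^{2n}` (momentum and position parts). -/
abbrev PhaseSpace (d n : ℕ) := (Fin n → ZMod d) × (Fin n → ZMod d)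

/-- The standard symplectic form `[u,v] = uᵀ J v` on `ℤ_d^{2n}`. -/
def sform {d n : ℕ} (u v : PhaseSpace d n) : ZMod d :=
  ∑ i, (u.1 i * v.2 i - u.2 i * v.1 i)

/-- A Lagrangian (maximally isotropic) subspace of the phase space. -/
def IsLagrangian {d n : ℕ} (M : Submodule (ZMod d) (PhaseSpace d n)) : Prop :=
  (∀ x ∈ M, ∀ y ∈ M, sform x y = 0) ∧ Module.finrank (ZMod d) M = n

/-- `ω = e^{2πi/d}`. -/
def omegaC (d : ℕ) : ℂ := Complex.exp (2 * Real.pi * Complex.I / d)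

/-- `τ = (-1)^d e^{πi/d}`. -/
def tauC (d : ℕ) : ℂ := (-1) ^ d * Complex.exp (Real.pi * Complex.I / d)

/-- The `n`-qudit Weyl operator `w(p,q) = w(p₁,q₁) ⊗ ⋯ ⊗ w(pₙ,qₙ)` on `(ℂ^d)^{⊗n}`,
written out in matrix entries: `w(p,q)_{x,y} = τ^{-Σᵢ pᵢqᵢ} ω^{p·x} δ_{x,y+q}`
(the exponent of `τ` being computed in the integers from representatives). -/
def weylN (d n : ℕ) (v : PhaseSpace d n) :
    Matrix (Fin n → ZMod d) (Fin n → ZMod d) ℂ := fun x y =>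
  (tauC d ^ (-((∑ i, (v.1 i).val * (v.2 i).val : ℕ) : ℤ)))
    * omegaC d ^ ((∑ i, v.1 i * x i : ZMod d)).val
    * (if x = y + v.2 then 1 else 0)

/-- The basis-dependent Weyl operators: given a basis `B = {u_i}` of a subspace
`M` and `m = Σ mᵢ uᵢ ∈ M`, set `w_B(m) = Πᵢ w(uᵢ)^{mᵢ}`. This turns `m ↦ w_B(m)`
into a true (non-projective) representation of `M` when `M` is isotropic. -/
def weylB {d n : ℕ} [NeZero d] {M : Submodule (ZMod d) (PhaseSpace d n)}
    {ι : Type*} [Fintype ι] (b : Module.Basis ι (ZMod d) M) (m : M) :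
    Matrix (Fin n → ZMod d) (Fin n → ZMod d) ℂ :=
  ((Finset.univ : Finset ι).toList.map
    (fun i => weylN d n ((b i : PhaseSpace d n)) ^ ((b.repr m) i).val)).prod

/-- The stabilizer-state operator `ρ_{M,v} = d^{-n} Σ_{m∈M} ω^{[v,m]} w_B(m)`. -/
def stabRho {d n : ℕ} [NeZero d] {M : Submodule (ZMod d) (PhaseSpace d n)}
    {ι : Type*} [Fintype ι] (b : Module.Basis ι (ZMod d) M) (v : PhaseSpace d n) :
    Matrix (Fin n → ZMod d) (Fin n → ZMod d) ℂ :=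
  ((d : ℂ) ^ n)⁻¹ • ∑ᶠ m : M, omegaC d ^ (sform v (m : PhaseSpace d n)).val • weylB b m

/-!
Isotropy of `M` makes the Weyl operators `w(bᵢ)` commute, and the choice of `τ` makes
`w(bᵢ)^d = 1`, so `m ↦ w_B(m)` is a representation of `M`. Each `w_B(m)` is a phase times the
shift by `m`, hence traceless unless `m = 0`. Consequently `tr(ρ_{M,u} ρ_{M,v})` collapses to the
character sum `d^{-n} Σ_{m∈M} ω^{[u-v,m]}`, which is `1` or `0` according as `u - v ∈ M`, because a
Lagrangian subspace is its own symplectic complement. Summing `ρ_{M,v}` over all `v` kills every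
`w_B(m)` with `m ≠ 0` by nondegeneracy of the symplectic form.
-/

open Finset ZMod
open scoped Matrix

section Phases

variable {d : ℕ} [NeZero d]

lemma stdAddChar_one_eq_omegaC : stdAddChar (1 : ZMod d) = omegaC d := by
  simpa [omegaC] using stdAddChar_coe (N := d) 1

lemma stdAddChar_natCast (k : ℕ) : stdAddChar (k : ZMod d) = omegaC d ^ k := by
  rw [← stdAddChar_one_eq_omegaC, ← AddChar.map_nsmul_eq_pow, nsmul_one]

lemma omegaC_pow_val (a : ZMod d) : omegaC d ^ a.val = stdAddChar a := by
  rw [← stdAddChar_natCast, natCast_zmod_val]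

lemma tauC_sq (d : ℕ) : tauC d ^ 2 = omegaC d := by
  rw [tauC, omegaC, mul_pow, ← pow_mul, mul_comm d, pow_mul, neg_one_sq, one_pow, one_mul,
    ← Complex.exp_nat_mul]
  ring_nf

lemma tauC_pow_sq : tauC d ^ (d ^ 2) = 1 := by
  have hd : (d : ℂ) ≠ 0 := Nat.cast_ne_zero.2 (NeZero.ne d)
  have hexp : Complex.exp (Real.pi * Complex.I / d) ^ (d ^ 2) = (-1) ^ d := by
    rw [← Complex.exp_nat_mul, ← Complex.exp_pi_mul_I, ← Complex.exp_nat_mul]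
    congr 1
    push_cast
    field_simp
  rw [tauC, mul_pow, hexp, ← pow_mul, ← pow_add]
  exact Even.neg_one_pow (by simp [Nat.even_add, Nat.even_mul, Nat.even_pow])

lemma sum_stdAddChar_comp {A : Type*} [AddGroup A] [Fintype A] (f : A →+ ZMod d) :
    ∑ a, stdAddChar (f a) = if f = 0 then (Fintype.card A : ℂ) else 0 := by
  have hf : stdAddChar.compAddMonoidHom f = 0 ↔ f = 0 := by
    have h0 : stdAddChar.compAddMonoidHom (0 : A →+ ZMod d) = 0 := by ext; simp
    rw [← h0, (AddChar.compAddMonoidHom_injective_right _ injective_stdAddChar).eq_iff]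
  simp only [← AddChar.compAddMonoidHom_apply, AddChar.sum_eq_ite, hf]

end Phases

section Symplectic

variable {d n : ℕ}

lemma sform_eq_dotProduct (u v : PhaseSpace d n) : sform u v = u.1 ⬝ᵥ v.2 - u.2 ⬝ᵥ v.1 := by
  simp [sform, dotProduct, Finset.sum_sub_distrib]

def symplecticForm (d n : ℕ) : LinearMap.BilinForm (ZMod d) (PhaseSpace d n) :=
  LinearMap.mk₂ (ZMod d) sform
    (fun u u' v => by
      simp only [sform_eq_dotProduct, Prod.fst_add, Prod.snd_add, add_dotProduct]
      ring)
    (fun c u v => by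
      simp only [sform_eq_dotProduct, Prod.smul_fst, Prod.smul_snd, smul_dotProduct, smul_eq_mul]
      ring)
    (fun u v v' => by
      simp only [sform_eq_dotProduct, Prod.fst_add, Prod.snd_add, dotProduct_add]
      ring)
    (fun c u v => by
      simp only [sform_eq_dotProduct, Prod.smul_fst, Prod.smul_snd, dotProduct_smul, smul_eq_mul]
      ring)

@[simp]
lemma symplecticForm_apply (u v : PhaseSpace d n) : symplecticForm d n u v = sform u v := rfl

lemma symplecticForm_isAlt : LinearMap.IsAlt (symplecticForm d n) := fun u => by
  simp [sform_eq_dotProduct, dotProduct_comm u.1]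

lemma symplecticForm_separatingRight : (symplecticForm d n).SeparatingRight := by
  intro w hw
  ext i
  · simpa [sform_eq_dotProduct] using hw (0, Pi.single i 1)
  · simpa [sform_eq_dotProduct] using hw (Pi.single i 1, 0)

lemma symplecticForm_nondegenerate : (symplecticForm d n).Nondegenerate :=
  symplecticForm_isAlt.isRefl.nondegenerate_iff_separatingRight.2 symplecticForm_separatingRight

variable [Fact d.Prime] {M : Submodule (ZMod d) (PhaseSpace d n)}

lemma IsLagrangian.orthogonal_eq (hM : IsLagrangian M) : (symplecticForm d n).orthogonal M = M := by
  refine (Submodule.eq_of_le_of_finrank_le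
    (fun x hx => LinearMap.BilinForm.mem_orthogonal_iff.2 fun y hy => hM.1 y hy x hx) ?_).symm
  rw [LinearMap.BilinForm.finrank_orthogonal symplecticForm_nondegenerate, hM.2,
    Module.finrank_prod, Module.finrank_fin_fun]
  omega

lemma IsLagrangian.mem_iff (hM : IsLagrangian M) {u : PhaseSpace d n} :
    u ∈ M ↔ ∀ m ∈ M, sform u m = 0 := by
  conv_lhs => rw [← hM.orthogonal_eq]
  rw [LinearMap.BilinForm.mem_orthogonal_iff]
  exact forall₂_congr fun m _ => symplecticForm_isAlt.isRefl.eq_iff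

lemma IsLagrangian.card_eq (hM : IsLagrangian M) : Fintype.card M = d ^ n := by
  rw [Module.card_eq_pow_finrank (K := ZMod d), ZMod.card, hM.2]

end Symplectic

section ShiftMatrices

variable {d : ℕ} [NeZero d] {κ : Type*} [Fintype κ]

def shiftMat (c : ℂ) (p q : κ → ZMod d) : Matrix (κ → ZMod d) (κ → ZMod d) ℂ :=
  Matrix.of fun x y => c * stdAddChar (p ⬝ᵥ x) * if x = y + q then 1 else 0

lemma shiftMat_one_zero_zero : shiftMat 1 (0 : κ → ZMod d) 0 = 1 := by
  ext x y
  simp [shiftMat, Matrix.one_apply]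

variable [DecidableEq κ]

lemma shiftMat_mul (c c' : ℂ) (p q p' q' : κ → ZMod d) :
    shiftMat c p q * shiftMat c' p' q' =
      shiftMat (c * c' * stdAddChar (-(p' ⬝ᵥ q))) (p + p') (q + q') := by
  ext x y
  rw [Matrix.mul_apply, Finset.sum_eq_single (x - q)]
  · have hx : x - q = y + q' ↔ x = y + (q + q') := by rw [sub_eq_iff_eq_add, add_assoc, add_comm q']
    have hdot : p' ⬝ᵥ (x - q) = p' ⬝ᵥ x + -(p' ⬝ᵥ q) := by rw [dotProduct_sub, sub_eq_add_neg]
    simp only [shiftMat, Matrix.of_apply, sub_add_cancel, ↓reduceIte, hx, hdot, add_dotProduct,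
      AddChar.map_add_eq_mul]
    ring
  · intro z _ hz
    have hxz : x ≠ z + q := fun h => hz (eq_sub_of_add_eq h.symm)
    simp [shiftMat, hxz]
  · simp

lemma shiftMat_pow (c : ℂ) (p q : κ → ZMod d) (k : ℕ) :
    shiftMat c p q ^ k =
      shiftMat (c ^ k * stdAddChar (-(p ⬝ᵥ q)) ^ (∑ j ∈ range k, j)) (k • p) (k • q) := by
  induction k with
  | zero => simp [shiftMat_one_zero_zero]
  | succ k ih =>
    rw [pow_succ, ih, shiftMat_mul, dotProduct_smul, ← smul_neg, AddChar.map_nsmul_eq_pow,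
      sum_range_succ, succ_nsmul, succ_nsmul]
    ring_nf

lemma exists_list_prod_shiftMat {α : Type*} (l : List α) (c : α → ℂ) (p q : α → κ → ZMod d) :
    ∃ c', (l.map fun i => shiftMat (c i) (p i) (q i)).prod =
      shiftMat c' (l.map p).sum (l.map q).sum := by
  induction l with
  | nil => exact ⟨1, by simp [shiftMat_one_zero_zero]⟩
  | cons a l ih =>
    obtain ⟨c', hc'⟩ := ih
    simp only [List.map_cons, List.prod_cons, List.sum_cons, hc', shiftMat_mul]
    exact ⟨_, rfl⟩

lemma shiftMat_commute {c c' : ℂ} {p q p' q' : κ → ZMod d} (h : p ⬝ᵥ q' = p' ⬝ᵥ q) :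
    Commute (shiftMat c p q) (shiftMat c' p' q') := by
  rw [Commute, SemiconjBy, shiftMat_mul, shiftMat_mul, ← h, mul_comm c, add_comm p, add_comm q]

lemma sum_stdAddChar_dotProduct (p : κ → ZMod d) :
    ∑ x : κ → ZMod d, stdAddChar (p ⬝ᵥ x) = if p = 0 then (d : ℂ) ^ Fintype.card κ else 0 := by
  have hp : AddMonoidHom.mk' (p ⬝ᵥ ·) (dotProduct_add p) = 0 ↔ p = 0 := by
    refine ⟨fun h => funext fun i => ?_, fun h => by ext; simp [h]⟩
    simpa using DFunLike.congr_fun h (Pi.single i 1)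
  simpa [hp, ZMod.card] using sum_stdAddChar_comp (AddMonoidHom.mk' (p ⬝ᵥ ·) (dotProduct_add p))

lemma trace_shiftMat (c : ℂ) (p q : κ → ZMod d) :
    (shiftMat c p q).trace = if p = 0 ∧ q = 0 then c * (d : ℂ) ^ Fintype.card κ else 0 := by
  by_cases hq : q = 0
  · simp [Matrix.trace, shiftMat, hq, ← Finset.mul_sum, sum_stdAddChar_dotProduct]
  · simp [Matrix.trace, shiftMat, hq]

end ShiftMatrices

section Weyl

variable {d n : ℕ} [NeZero d]

lemma weylN_eq_shiftMat (v : PhaseSpace d n) :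
    weylN d n v = shiftMat (tauC d ^ (-((∑ i, (v.1 i).val * (v.2 i).val : ℕ) : ℤ))) v.1 v.2 := by
  ext x y
  simp [weylN, shiftMat, omegaC_pow_val, dotProduct]

lemma weylN_pow_card (v : PhaseSpace d n) : weylN d n v ^ d = 1 := by
  set s := ∑ i, (v.1 i).val * (v.2 i).val with hs
  have hdot : stdAddChar (v.1 ⬝ᵥ v.2) = tauC d ^ (2 * s) := by
    rw [pow_mul, tauC_sq, ← stdAddChar_natCast, hs]
    simp [dotProduct]
  -- `τ` is normalised so that the accumulated phase `τ^{-s (d + 2 C(d,2))} = τ^{-s d²}` is trivial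
  have hphase : s * d + 2 * s * (∑ j ∈ range d, j) = d ^ 2 * s := by
    have hT := Finset.sum_range_id_mul_two d
    zify [NeZero.one_le (n := d)] at hT ⊢
    linear_combination (s : ℤ) * hT
  have hchar : ∀ w : Fin n → ZMod d, d • w = 0 := fun w => by
    rw [← Nat.cast_smul_eq_nsmul (ZMod d), ZMod.natCast_self, zero_smul]
  rw [weylN_eq_shiftMat, ← hs, shiftMat_pow, hchar, hchar, ← shiftMat_one_zero_zero,
    AddChar.map_neg_eq_inv, hdot, zpow_neg, zpow_natCast, inv_pow, inv_pow, ← mul_inv,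
    ← pow_mul, ← pow_mul, ← pow_add, mul_assoc 2, ← mul_assoc, hphase, pow_mul, tauC_pow_sq,
    one_pow, inv_one]

lemma weylN_pow_val_add (v : PhaseSpace d n) (a b : ZMod d) :
    weylN d n v ^ (a + b).val = weylN d n v ^ a.val * weylN d n v ^ b.val := by
  rw [← pow_add, ZMod.val_add, ← pow_eq_pow_mod _ (weylN_pow_card v)]

lemma weylN_commute {u v : PhaseSpace d n} (h : sform u v = 0) :
    Commute (weylN d n u) (weylN d n v) := by
  rw [weylN_eq_shiftMat, weylN_eq_shiftMat]
  apply shiftMat_commute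
  rwa [sform_eq_dotProduct, sub_eq_zero, dotProduct_comm u.2] at h

end Weyl

theorem List.prod_map_mul_of_commute {α G : Type*} [Monoid G] (l : List α) {f g : α → G}
    (h : ∀ i j, Commute (f i) (g j)) :
    (l.map fun i => f i * g i).prod = (l.map f).prod * (l.map g).prod := by
  induction l with
  | nil => simp
  | cons a l ih =>
    have hc : Commute (g a) (l.map f).prod :=
      Commute.list_prod_right _ _ fun x hx => by
        obtain ⟨i, -, rfl⟩ := List.mem_map.1 hx
        exact (h i a).symm
    simp only [List.map_cons, List.prod_cons, ih, mul_assoc, hc.left_comm]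

section WeylB

variable {d n : ℕ} [NeZero d] {M : Submodule (ZMod d) (PhaseSpace d n)} {ι : Type*} [Fintype ι]

lemma weylB_zero (b : Module.Basis ι (ZMod d) M) : weylB b 0 = 1 := by
  simp [weylB]

lemma weylB_add (hM : ∀ x ∈ M, ∀ y ∈ M, sform x y = 0) (b : Module.Basis ι (ZMod d) M)
    (m m' : M) : weylB b (m + m') = weylB b m * weylB b m' := by
  rw [weylB, weylB, weylB, ← List.prod_map_mul_of_commute _
    fun i j => (weylN_commute (hM _ (b i).2 _ (b j).2)).pow_pow _ _]
  simp only [map_add, Finsupp.add_apply, weylN_pow_val_add]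

lemma weylB_eq_shiftMat (b : Module.Basis ι (ZMod d) M) (m : M) :
    ∃ c, weylB b m = shiftMat c (m : PhaseSpace d n).1 (m : PhaseSpace d n).2 := by
  have hsum : ∑ i, (b.repr m i).val • (b i : PhaseSpace d n) = m := by
    simp_rw [← Nat.cast_smul_eq_nsmul (ZMod d), natCast_zmod_val]
    exact_mod_cast congrArg Subtype.val (b.sum_repr m)
  simp only [weylB, weylN_eq_shiftMat, shiftMat_pow]
  obtain ⟨c, hc⟩ := exists_list_prod_shiftMat (Finset.univ : Finset ι).toList _
    (fun i => (b.repr m i).val • (b i : PhaseSpace d n).1)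
    (fun i => (b.repr m i).val • (b i : PhaseSpace d n).2)
  refine ⟨c, hc.trans ?_⟩
  simp only [Finset.sum_map_toList, ← hsum, Prod.fst_sum, Prod.snd_sum, Prod.smul_fst,
    Prod.smul_snd]

lemma trace_weylB (b : Module.Basis ι (ZMod d) M) (m : M) :
    (weylB b m).trace = if m = 0 then (d : ℂ) ^ n else 0 := by
  obtain ⟨c, hc⟩ := weylB_eq_shiftMat b m
  by_cases hm : m = 0
  · simp [hm, weylB_zero, ZMod.card]
  · have hm' : ¬((m : PhaseSpace d n).1 = 0 ∧ (m : PhaseSpace d n).2 = 0) := fun h =>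
      hm (Subtype.ext (Prod.ext h.1 h.2))
    rw [hc, trace_shiftMat, if_neg hm', if_neg hm]

end WeylB

theorem Matrix.trace_sum_smul_mul_sum_smul {G R κ : Type*} [AddGroup G] [Fintype G] [DecidableEq G]
    [CommSemiring R] [Fintype κ] [DecidableEq κ] {W : G → Matrix κ κ R}
    (hW : ∀ g h, W (g + h) = W g * W h) {N : R} (htr : ∀ g, (W g).trace = if g = 0 then N else 0)
    (a b : G → R) :
    ((∑ g, a g • W g) * ∑ g, b g • W g).trace = N * ∑ g, a g * b (-g) := by
  simp_rw [Finset.sum_mul_sum, Matrix.trace_sum, smul_mul_smul_comm, ← hW, Matrix.trace_smul,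
    htr, add_eq_zero_iff_eq_neg', smul_eq_mul, mul_ite, mul_zero, Finset.sum_ite_eq',
    Finset.mem_univ, if_true, Finset.mul_sum]
  ring_nf

section Projectors

variable {d n : ℕ} [NeZero d] {M : Submodule (ZMod d) (PhaseSpace d n)} {ι : Type*} [Fintype ι]

lemma stabRho_eq_sum (b : Module.Basis ι (ZMod d) M) (v : PhaseSpace d n) :
    stabRho b v = ((d : ℂ) ^ n)⁻¹ • ∑ m : M, stdAddChar (sform v m) • weylB b m := by
  simp_rw [stabRho, finsum_eq_sum_of_fintype, omegaC_pow_val]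

lemma trace_stabRho_mul_eq_sum (hM : ∀ x ∈ M, ∀ y ∈ M, sform x y = 0)
    (b : Module.Basis ι (ZMod d) M) (u v : PhaseSpace d n) :
    (stabRho b u * stabRho b v).trace =
      ((d : ℂ) ^ n)⁻¹ * ∑ m : M, stdAddChar (sform (u - v) m) := by
  have hd : (d : ℂ) ^ n ≠ 0 := pow_ne_zero _ (Nat.cast_ne_zero.2 (NeZero.ne d))
  have hphase (m : M) : stdAddChar (sform u m) * stdAddChar (sform v ↑(-m)) =
      stdAddChar (sform (u - v) m) := by
    rw [← AddChar.map_add_eq_mul]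
    congr 1
    simp only [← symplecticForm_apply, NegMemClass.coe_neg, map_neg, map_sub, LinearMap.sub_apply]
    ring
  rw [stabRho_eq_sum, stabRho_eq_sum, smul_mul_smul_comm, Matrix.trace_smul,
    Matrix.trace_sum_smul_mul_sum_smul (weylB_add hM b) (trace_weylB b)]
  simp only [hphase, smul_eq_mul]
  field_simp

lemma sum_stdAddChar_sform_left (m : PhaseSpace d n) :
    ∑ v : PhaseSpace d n, stdAddChar (sform v m) =
      if m = 0 then (Fintype.card (PhaseSpace d n) : ℂ) else 0 := by
  have hm : ((symplecticForm d n).flip m).toAddMonoidHom = 0 ↔ m = 0 :=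
    ⟨fun h => symplecticForm_separatingRight m fun v => DFunLike.congr_fun h v,
      fun h => by ext; simp [h]⟩
  simpa [hm] using sum_stdAddChar_comp ((symplecticForm d n).flip m).toAddMonoidHom

lemma sum_stabRho (b : Module.Basis ι (ZMod d) M) :
    ∑ᶠ v, stabRho b v = ((d : ℂ) ^ n) • (1 : Matrix (Fin n → ZMod d) (Fin n → ZMod d) ℂ) := by
  have hd : (d : ℂ) ^ n ≠ 0 := pow_ne_zero _ (Nat.cast_ne_zero.2 (NeZero.ne d))
  simp_rw [finsum_eq_sum_of_fintype, stabRho_eq_sum, ← Finset.smul_sum]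
  rw [Finset.sum_comm]
  simp_rw [← Finset.sum_smul, sum_stdAddChar_sform_left, ite_smul, zero_smul,
    ZeroMemClass.coe_eq_zero, Finset.sum_ite_eq', Finset.mem_univ, if_true, weylB_zero, smul_smul,
    Fintype.card_prod, Fintype.card_fun, ZMod.card, Fintype.card_fin]
  congr 1
  push_cast
  field_simp

variable [Fact d.Prime]

lemma IsLagrangian.sum_stdAddChar_sform (hM : IsLagrangian M) (w : PhaseSpace d n) :
    ∑ m : M, stdAddChar (sform w m) = if w ∈ M then (d : ℂ) ^ n else 0 := by
  have hw : ((symplecticForm d n w).comp M.subtype).toAddMonoidHom = 0 ↔ w ∈ M := by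
    rw [hM.mem_iff]
    exact ⟨fun h m hm => DFunLike.congr_fun h ⟨m, hm⟩, fun h => by ext m; exact h m m.2⟩
  simpa [hw, hM.card_eq] using
    sum_stdAddChar_comp ((symplecticForm d n w).comp M.subtype).toAddMonoidHom

lemma IsLagrangian.trace_stabRho_mul (hM : IsLagrangian M) (b : Module.Basis ι (ZMod d) M)
    (u v : PhaseSpace d n) :
    (stabRho b u * stabRho b v).trace = if u - v ∈ M then 1 else 0 := by
  have hd : (d : ℂ) ^ n ≠ 0 := pow_ne_zero _ (Nat.cast_ne_zero.2 (NeZero.ne d))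
  rw [trace_stabRho_mul_eq_sum hM.1, hM.sum_stdAddChar_sform]
  split_ifs <;> simp [hd]

lemma IsLagrangian.stabRho_eq_stabRho_iff (hM : IsLagrangian M) (b : Module.Basis ι (ZMod d) M)
    (u v : PhaseSpace d n) : stabRho b u = stabRho b v ↔ u - v ∈ M := by
  refine ⟨fun h => ?_, fun h => ?_⟩
  · have := hM.trace_stabRho_mul b u v
    rw [h, hM.trace_stabRho_mul, sub_self, if_pos M.zero_mem] at this
    by_contra huv
    simp [huv] at this
  · simp_rw [stabRho_eq_sum]
    congr 2 with m
    have := hM.mem_iff.1 h m m.2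
    rw [← symplecticForm_apply, map_sub, LinearMap.sub_apply, sub_eq_zero] at this
    rw [← symplecticForm_apply, this, symplecticForm_apply]

end Projectors

/-- **Stabilizer states form orthonormal bases.** Let `M ⊆ ℤ_d^{2n}` be a Lagrangian
subspace with basis `B`. The states `|M,v⟩` (with projectors
`ρ_{M,v} = d^{-n} Σ_{m∈M} ω^{[v,m]} w_B(m)`) satisfy:
`|M,u⟩ = |M,v⟩` (up to phase, i.e. `ρ_{M,u} = ρ_{M,v}`) iff `u - v ∈ M`;
`⟨M,u|M,v⟩ = 0` (i.e. `tr(ρ_{M,u} ρ_{M,v}) = 0`) otherwise; and the `d^n` distinct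
states form an orthonormal basis of `(ℂ^d)^{⊗n}`: summing `ρ_{M,v}` over all
`v ∈ V` (each coset of `V/M` appearing `|M| = d^n` times) gives `d^n · 𝟙`,
i.e. the distinct projectors resolve the identity. -/
theorem stab_orthonormal_basis (d n : ℕ) (hd : d.Prime) [NeZero d]
    (M : Submodule (ZMod d) (PhaseSpace d n)) (hM : IsLagrangian M)
    {ι : Type*} [Fintype ι] (b : Module.Basis ι (ZMod d) M) :
    (∀ u v : PhaseSpace d n, (stabRho b u = stabRho b v ↔ u - v ∈ M)) ∧
    (∀ u v : PhaseSpace d n, u - v ∉ M → (stabRho b u * stabRho b v).trace = 0) ∧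
    (∑ᶠ v : PhaseSpace d n, stabRho b v)
      = ((d : ℂ) ^ n) • (1 : Matrix (Fin n → ZMod d) (Fin n → ZMod d) ℂ) := by
  have := Fact.mk hd
  exact ⟨hM.stabRho_eq_stabRho_iff b, fun u v huv => by rw [hM.trace_stabRho_mul, if_neg huv],
    sum_stabRho b⟩
end
end

section
/- For all n ≥ 1, F_3(2,n) = W_3(2^n), while for every prime d ≥ 3 and all n ≥ 1, F_3(d,n) > W_3(d^n). Here F_t(d,n) = S(d,n)^{-1} Σ_{k=0}^n binom(n,k)_d d^{(n-k)(n-k+3-2t)/2} with S(d,n) = d^n Π_{j=1}^n (d^j+1), and W_3(D) = 6/((D+2)(D+1)D). Hence qubit stabilizer states form a complex projective 3-design, and qudit stabilizer states for odd prime d do not. -/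
/-- The Gaussian binomial coefficient `binom(n,k)_d`. -/
noncomputable def gbinom (d n k : ℕ) : ℚ :=
  if k ≤ n then ∏ i ∈ Finset.range k, ((d : ℚ) ^ (n - i) - 1) / ((d : ℚ) ^ (k - i) - 1)
  else 0

/-- `S(d,n) = d^n · Π_{j=1}^n (d^j + 1)`, the number of stabilizer states in
dimension `d^n`. -/
def Scard (d n : ℕ) : ℕ := d ^ n * ∏ j ∈ Finset.Icc 1 n, (d ^ j + 1)

/-- The `t`-th frame potential of the stabilizer states in dimension `d^n`:
`F_t(d,n) = S(d,n)⁻¹ Σ_{k=0}^n binom(n,k)_d d^{(n-k)(n-k+3-2t)/2}`. -/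
noncomputable def framePot (d t n : ℕ) : ℚ :=
  (Scard d n : ℚ)⁻¹ * ∑ k ∈ Finset.range (n + 1),
    gbinom d n k * (d : ℚ) ^ ((((n : ℤ) - k) * ((n : ℤ) - k + 3 - 2 * t)) / 2)

/-- The order-3 Welch bound `W_3(D) = binom(D+2,3)⁻¹ = 6/((D+2)(D+1)D)`. -/
noncomputable def welch3 (D : ℕ) : ℚ :=
  6 / (((D : ℚ) + 2) * ((D : ℚ) + 1) * (D : ℚ))

/-!
The frame-potential sum is a `q`-binomial expansion: by the `q`-Pascal rule,
`Σ_k binom(n,k)_d d^{C(n-k,2)} x^{n-k} = Π_{i<n} (1 + d^i x)`, and the exponent of `F_t` is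
`C(n-k,2) + (2-t)(n-k)`, so `x = d^{2-t}`. For `t = 3` the product telescopes against `S(d,n)`
and, with `D = d^n`, `F_3(d,n) - W_3(D) = 2(d-2)(D-1) / (D(D+d)(D+1)(D+2))`, which vanishes for
`d = 2` and is positive for `d ≥ 3`, `n ≥ 1`.
-/

open Finset

section

variable {d : ℕ}

theorem gbinom_zero_right (n : ℕ) : gbinom d n 0 = 1 := by
  simp [gbinom]

theorem gbinom_of_lt {n k : ℕ} (h : n < k) : gbinom d n k = 0 := by
  rw [gbinom, if_neg h.not_ge]

theorem gbinom_succ_succ (n k : ℕ) :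
    gbinom d (n + 1) (k + 1) =
      gbinom d n k * (((d : ℚ) ^ (n + 1) - 1) / ((d : ℚ) ^ (k + 1) - 1)) := by
  rcases le_or_gt k n with hk | hk
  · rw [gbinom, if_pos (by omega), prod_range_succ', gbinom, if_pos hk]
    simp only [Nat.succ_sub_succ, Nat.sub_zero]
  · simp [gbinom_of_lt hk, gbinom_of_lt (Nat.succ_lt_succ hk)]

theorem pow_sub_one_ne_zero (hd : 1 < d) {j : ℕ} (hj : j ≠ 0) : (d : ℚ) ^ j - 1 ≠ 0 :=
  (sub_pos.2 (one_lt_pow₀ (by exact_mod_cast hd) hj)).ne'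

theorem gbinom_succ_right_mul (hd : 1 < d) (n k : ℕ) :
    gbinom d n (k + 1) * ((d : ℚ) ^ (k + 1) - 1) = gbinom d n k * ((d : ℚ) ^ (n - k) - 1) := by
  rcases lt_or_ge k n with hk | hk
  · rw [gbinom, if_pos (Nat.succ_le_of_lt hk), gbinom, if_pos hk.le, prod_div_distrib,
      prod_div_distrib, prod_range_succ, prod_range_succ' (fun i => (d : ℚ) ^ (k + 1 - i) - 1)]
    simp only [Nat.succ_sub_succ, Nat.sub_zero]
    have := pow_sub_one_ne_zero hd (j := k + 1) (by omega)
    field_simp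
  · simp [gbinom_of_lt (Nat.lt_succ_of_le hk), Nat.sub_eq_zero_of_le hk]

theorem gbinom_succ_succ_eq_add (hd : 1 < d) (n k : ℕ) :
    gbinom d (n + 1) (k + 1) = gbinom d n k + (d : ℚ) ^ (k + 1) * gbinom d n (k + 1) := by
  rcases le_or_gt k n with hk | hk
  · have hq := pow_sub_one_ne_zero hd (j := k + 1) (by omega)
    apply mul_right_cancel₀ hq
    rw [gbinom_succ_succ, add_mul, mul_assoc _ (gbinom d n (k + 1)), gbinom_succ_right_mul hd,
      mul_assoc, div_mul_cancel₀ _ hq, ← pow_sub_mul_pow (d : ℚ) (by omega : k + 1 ≤ n + 1)]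
    rw [show n + 1 - (k + 1) = n - k by omega]
    ring
  · simp [gbinom_of_lt hk, gbinom_of_lt (Nat.succ_lt_succ hk),
      gbinom_of_lt (hk.trans (Nat.lt_succ_self k))]

theorem sum_gbinom_mul_pow_choose_two (hd : 1 < d) (x : ℚ) (n : ℕ) :
    ∑ k ∈ range (n + 1), gbinom d n k * ((d : ℚ) ^ (n - k).choose 2 * x ^ (n - k)) =
      ∏ i ∈ range n, (1 + (d : ℚ) ^ i * x) := by
  set c : ℕ → ℚ := fun m => (d : ℚ) ^ m.choose 2 * x ^ m with hc
  have hc_succ (m : ℕ) : c (m + 1) = (d : ℚ) ^ m * x * c m := by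
    simp only [hc, Nat.choose_succ_succ', Nat.choose_one_right, pow_add, pow_succ]
    ring
  induction n with
  | zero => simp [gbinom_zero_right]
  | succ n ih =>
    have hshift : ∑ k ∈ range (n + 1), (d : ℚ) ^ (k + 1) * gbinom d n (k + 1) * c (n - k) =
        (d : ℚ) ^ n * x * ∑ k ∈ range n, gbinom d n (k + 1) * c (n - (k + 1)) := by
      rw [sum_range_succ, gbinom_of_lt (Nat.lt_succ_self n), mul_zero, zero_mul, add_zero,
        mul_sum]
      refine sum_congr rfl fun k hk => ?_
      have hkn : n - k = n - (k + 1) + 1 := by rw [mem_range] at hk; omega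
      rw [hkn, hc_succ, ← pow_sub_mul_pow (d : ℚ) (show k + 1 ≤ n by rw [mem_range] at hk; omega)]
      ring
    calc ∑ k ∈ range (n + 1 + 1), gbinom d (n + 1) k * c (n + 1 - k)
        = ∑ k ∈ range (n + 1), gbinom d n k * c (n - k)
            + ∑ k ∈ range (n + 1), (d : ℚ) ^ (k + 1) * gbinom d n (k + 1) * c (n - k)
            + c (n + 1) := by
          simp only [sum_range_succ' _ (n + 1), gbinom_succ_succ_eq_add hd, Nat.succ_sub_succ,
            add_mul, sum_add_distrib, gbinom_zero_right, one_mul, Nat.sub_zero]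
      _ = (∑ k ∈ range (n + 1), gbinom d n k * c (n - k)) * (1 + (d : ℚ) ^ n * x) := by
          rw [hshift, hc_succ, sum_range_succ' _ n, gbinom_zero_right, Nat.sub_zero]
          ring
      _ = ∏ i ∈ range (n + 1), (1 + (d : ℚ) ^ i * x) := by
          rw [ih, prod_range_succ]

theorem zpow_mul_add_three_sub_div_two (hd : d ≠ 0) (m t : ℕ) :
    (d : ℚ) ^ (((m : ℤ) * (m + 3 - 2 * t)) / 2) =
      (d : ℚ) ^ m.choose 2 * ((d : ℚ) ^ ((2 : ℤ) - t)) ^ m := by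
  have hexp : (m : ℤ) * (m + 3 - 2 * t) = 2 * ((m.choose 2 : ℕ) + m * (2 - t)) := by
    apply Int.cast_injective (α := ℚ)
    push_cast [Nat.cast_choose_two]
    ring
  rw [hexp, Int.mul_ediv_cancel_left _ two_ne_zero, zpow_add₀ (by exact_mod_cast hd),
    zpow_natCast, ← zpow_natCast _ m, ← zpow_mul, mul_comm (m : ℤ)]

theorem framePot_eq_prod (hd : 1 < d) (t n : ℕ) :
    framePot d t n =
      (Scard d n : ℚ)⁻¹ * ∏ i ∈ range n, (1 + (d : ℚ) ^ i * (d : ℚ) ^ ((2 : ℤ) - t)) := by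
  rw [framePot, ← sum_gbinom_mul_pow_choose_two hd]
  congr 1
  refine sum_congr rfl fun k hk => ?_
  have hkn : (n : ℤ) - k = ((n - k : ℕ) : ℤ) := by rw [mem_range] at hk; omega
  rw [hkn, zpow_mul_add_three_sub_div_two (by omega)]

theorem prod_one_add_pow_mul_inv_mul {K : Type*} [Field K] {q : K} (hq : q ≠ 0) (n : ℕ) :
    (∏ i ∈ range n, (1 + q ^ i * q⁻¹)) * ((q ^ n + q) * (q ^ n + 1)) =
      2 * (q + 1) * ∏ j ∈ Icc 1 n, (q ^ j + 1) := by
  induction n with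
  | zero =>
    rw [prod_range_zero, Icc_eq_empty_of_lt zero_lt_one, prod_empty]
    ring
  | succ n ih =>
    rw [prod_range_succ, prod_Icc_succ_top (by omega), ← mul_assoc (2 * (q + 1)), ← ih]
    field_simp
    ring

theorem framePot_three (hd : 1 < d) (n : ℕ) :
    framePot d 3 n = 2 * ((d : ℚ) + 1) /
      ((d : ℚ) ^ n * ((d : ℚ) ^ n + d) * ((d : ℚ) ^ n + 1)) := by
  have hq : (d : ℚ) ≠ 0 := by positivity
  have hprod : ∏ i ∈ range n, (1 + (d : ℚ) ^ i * (d : ℚ)⁻¹) =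
      (2 * ((d : ℚ) + 1) * ∏ j ∈ Icc 1 n, ((d : ℚ) ^ j + 1)) /
        (((d : ℚ) ^ n + d) * ((d : ℚ) ^ n + 1)) :=
    eq_div_of_mul_eq (by positivity) (prod_one_add_pow_mul_inv_mul hq n)
  have hQ : ∏ j ∈ Icc 1 n, ((d : ℚ) ^ j + 1) ≠ 0 := prod_ne_zero_iff.2 fun j _ => by positivity
  rw [framePot_eq_prod hd, show (2 : ℤ) - ((3 : ℕ) : ℤ) = -1 by norm_num, zpow_neg_one, hprod,
    Scard]
  push_cast
  field_simp

theorem framePot_three_sub_welch3 (hd : 1 < d) (n : ℕ) :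
    framePot d 3 n - welch3 (d ^ n) = 2 * ((d : ℚ) - 2) * ((d : ℚ) ^ n - 1) /
      ((d : ℚ) ^ n * ((d : ℚ) ^ n + d) * ((d : ℚ) ^ n + 1) * ((d : ℚ) ^ n + 2)) := by
  have hq : (d : ℚ) ≠ 0 := by positivity
  rw [framePot_three hd, welch3]
  push_cast
  field_simp
  ring

end

/-- **Qubit stabilizer states are complex projective 3-designs; odd-prime qudit
stabilizer states are not.** For all `n ≥ 1`, `F_3(2,n) = W_3(2^n)`, while for every
prime `d ≥ 3` and all `n ≥ 1`, `F_3(d,n) > W_3(d^n)`. -/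
theorem stab_three_design_iff_qubit :
    (∀ n : ℕ, 1 ≤ n → framePot 2 3 n = welch3 (2 ^ n)) ∧
    (∀ d : ℕ, d.Prime → 3 ≤ d → ∀ n : ℕ, 1 ≤ n → welch3 (d ^ n) < framePot d 3 n) := by
  refine ⟨fun n _ => ?_, fun d _ hd n hn => ?_⟩
  · rw [← sub_eq_zero, framePot_three_sub_welch3 one_lt_two]
    norm_num
  · have hd' : (3 : ℚ) ≤ d := by exact_mod_cast hd
    have hpow : 1 < (d : ℚ) ^ n := one_lt_pow₀ (by linarith) (by omega)
    rw [← sub_pos, framePot_three_sub_welch3 (by omega)]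
    exact div_pos (mul_pos (mul_pos two_pos (by linarith)) (by linarith)) (by positivity)
end
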